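/- Let v be an additive non-degenerate valuation with strong EEFX share θ. Then there exists a partition (X_1,…,X_n) of M such that v(X_ℓ) ≥ θ for all ℓ ∈ [n]. -/

import Mathlib

open Finset

def IsAdditive {ι : Type*} [DecidableEq ι] (v : Finset ι → ℝ) : Prop :=
  ∀ S : Finset ι, v S = ∑ g ∈ S, v {g}

def IsPartition {ι : Type*} [DecidableEq ι] (A : Finset ι) {k : ℕ} (P : Fin k → Finset ι) : Prop :=
  (∀ i j : Fin k, i ≠ j → Disjoint (P i) (P j)) ∧ Finset.univ.biUnion P = A

def EEFXFeasible {ι : Type*} [DecidableEq ι] (M : Finset ι) (v : Finset ι → ℝ) (n : ℕ)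
    (B : Finset ι) : Prop :=
  ∃ P : Fin (n - 1) → Finset ι, IsPartition (M \ B) P ∧
    ∀ j, ∀ g ∈ P j, v (P j \ {g}) ≤ v B

def NonDegenerate {ι : Type*} [DecidableEq ι] (M : Finset ι) (v : Finset ι → ℝ) : Prop :=
  ∀ S ⊆ M, ∀ T ⊆ M, S ≠ T → v S ≠ v T

noncomputable def strongShare {ι : Type*} [DecidableEq ι] (M : Finset ι) (v : Finset ι → ℝ)
    (n : ℕ) : ℝ :=
  sInf {x | ∃ S ⊆ M, v S = x ∧ ∀ T ⊆ M, x ≤ v T → EEFXFeasible M v n T}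

noncomputable def MXS {ι : Type*} [DecidableEq ι] (M : Finset ι) (v : Finset ι → ℝ)
    (n : ℕ) : ℝ :=
  sInf {x | ∃ S ⊆ M, v S = x ∧ EEFXFeasible M v n S}

noncomputable def MMS {ι : Type*} [DecidableEq ι] (M : Finset ι) (v : Finset ι → ℝ)
    (n : ℕ) : ℝ :=
  sSup {x | ∃ P : Fin n → Finset ι, IsPartition M P ∧ x = ⨅ j, v (P j)}

def ResidualSelfFeasible {ι : Type*} [DecidableEq ι] (M : Finset ι) (v : Finset ι → ℝ)
    (n : ℕ) (t : ℝ) : Prop :=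
  ∀ k : ℕ, k < n → ∀ S : Fin k → Finset ι,
    (∀ j, S j ⊆ M) → (∀ i j : Fin k, i ≠ j → Disjoint (S i) (S j)) → (∀ j, v (S j) < t) →
    ∃ X : Fin (n - k) → Finset ι,
      IsPartition (M \ Finset.univ.biUnion S) X ∧ ∀ j, t ≤ v (X j)

noncomputable def RMMS {ι : Type*} [DecidableEq ι] (M : Finset ι) (v : Finset ι → ℝ)
    (n : ℕ) : ℝ :=
  sSup {t | ResidualSelfFeasible M v n t}

/-! Let `T` be an EEFX-infeasible bundle of maximal value `c` (if there is none,
every bundle is feasible and the share is at most `0`). Any bundle worth more than `c` is a witness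
in the infimum defining the share, so it suffices to split `M` into `n` bundles each worth more
than `c`. Take an EFX partition of `M \ T` into `n - 1` parts (one minimising the sum of squared
values); since `T` is infeasible, some part `P j` has an item `g` with `v (P j \ {g}) > c`. Moving
`g` into `T` gives the required partition: `T ∪ {g}` is worth more than `c` by non-degeneracy, and
every other part is worth at least `v (P j \ {g})` by EFX. -/

open Function

section Valuation

variable {ι : Type*} [DecidableEq ι] {v : Finset ι → ℝ}

lemma IsAdditive.map_insert (hadd : IsAdditive v) {S : Finset ι} {g : ι} (hg : g ∉ S) :
    v (insert g S) = v {g} + v S := by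
  rw [hadd (insert g S), hadd S, Finset.sum_insert hg]

lemma IsAdditive.map_sdiff_singleton (hadd : IsAdditive v) {S : Finset ι} {g : ι} (hg : g ∈ S) :
    v (S \ {g}) = v S - v {g} := by
  rw [hadd (S \ {g}), hadd S, ← Finset.sum_sdiff (Finset.singleton_subset_iff.2 hg),
    Finset.sum_singleton]
  ring

lemma IsAdditive.monotone (hadd : IsAdditive v) (hnn : ∀ S : Finset ι, 0 ≤ v S) : Monotone v :=
  fun A B h => by
    rw [hadd A, hadd B]
    exact Finset.sum_le_sum_of_subset_of_nonneg h fun g _ _ => hnn {g}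

lemma NonDegenerate.strictMonoOn {M : Finset ι} (hnd : NonDegenerate M v) (hadd : IsAdditive v)
    (hnn : ∀ S : Finset ι, 0 ≤ v S) : StrictMonoOn v (Set.Iic M) :=
  fun S hS T hT hST => (hadd.monotone hnn hST.le).lt_of_ne (hnd S hS T hT hST.ne)

end Valuation

section Fibers

variable {ι : Type*} {k : ℕ}

/-- Partitions of `A` are encoded by assignments `f : ι → Fin k`, so that moving an item is
`update f g i` and the result is again a partition. -/
def fibers (A : Finset ι) (f : ι → Fin k) (i : Fin k) : Finset ι := {x ∈ A | f x = i}

variable {A : Finset ι} {f : ι → Fin k}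

@[simp]
lemma mem_fibers {x : ι} {i : Fin k} : x ∈ fibers A f i ↔ x ∈ A ∧ f x = i :=
  Finset.mem_filter

lemma isPartition_fibers [DecidableEq ι] (A : Finset ι) (f : ι → Fin k) :
    IsPartition A (fibers A f) := by
  refine ⟨fun i j hij => Finset.disjoint_left.2 fun x hi hj => hij ?_, ?_⟩
  · rw [← (mem_fibers.1 hi).2, (mem_fibers.1 hj).2]
  · ext x
    simp

lemma IsPartition.subset [DecidableEq ι] {P : Fin k → Finset ι} (h : IsPartition A P)
    (i : Fin k) : P i ⊆ A :=
  h.2 ▸ Finset.subset_biUnion_of_mem P (Finset.mem_univ i)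

lemma notMem_fibers_of_mem_fibers {g : ι} {i j : Fin k} (hg : g ∈ fibers A f j) (hij : i ≠ j) :
    g ∉ fibers A f i :=
  fun h => hij ((mem_fibers.1 h).2.symm.trans (mem_fibers.1 hg).2)

lemma fibers_update_self [DecidableEq ι] {g : ι} (hg : g ∈ A) (i : Fin k) :
    fibers A (update f g i) i = insert g (fibers A f i) := by
  ext x
  by_cases hx : x = g <;> simp [hx, hg]

lemma fibers_update_of_ne [DecidableEq ι] {g : ι} {i l : Fin k} (hl : l ≠ i) :
    fibers A (update f g i) l = fibers A f l \ {g} := by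
  ext x
  by_cases hx : x = g <;> simp [hx, Ne.symm hl]

lemma fibers_ite_zero [DecidableEq ι] {B : Finset ι} (hB : B ⊆ A) :
    fibers A (fun x => if x ∈ B then 0 else (f x).succ) 0 = B := by
  ext x
  by_cases hx : x ∈ B
  · simp [hx, hB hx]
  · simp [hx]

lemma fibers_ite_succ [DecidableEq ι] (B : Finset ι) (i : Fin k) :
    fibers A (fun x => if x ∈ B then 0 else (f x).succ) i.succ = fibers (A \ B) f i := by
  ext x
  by_cases hx : x ∈ B <;> simp [hx, (Fin.succ_ne_zero i).symm]

lemma fibers_sdiff_insert [DecidableEq ι] (B : Finset ι) (g : ι) (i : Fin k) :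
    fibers (A \ insert g B) f i = fibers (A \ B) f i \ {g} := by
  ext x
  simp only [mem_fibers, Finset.mem_sdiff, Finset.mem_insert, Finset.mem_singleton]
  tauto

end Fibers

section EFX

variable {ι : Type*} [DecidableEq ι] {k : ℕ} {v : Finset ι → ℝ}

def IsEFX (v : Finset ι → ℝ) (P : Fin k → Finset ι) : Prop :=
  ∀ i j, ∀ g ∈ P j, v (P j \ {g}) ≤ v (P i)

lemma sum_sq_fibers_update_lt (hadd : IsAdditive v) {A : Finset ι} {f : ι → Fin k} {i j : Fin k}
    {g : ι} (hij : i ≠ j) (hg : g ∈ fibers A f j) (hpos : 0 < v {g})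
    (hlt : v (fibers A f i) < v (fibers A f j \ {g})) :
    ∑ l, v (fibers A (update f g i) l) ^ 2 < ∑ l, v (fibers A f l) ^ 2 := by
  have hgA : g ∈ A := (mem_fibers.1 hg).1
  have hrest : ∀ l ∈ ({i, j} : Finset (Fin k))ᶜ,
      v (fibers A (update f g i) l) ^ 2 = v (fibers A f l) ^ 2 := by
    intro l hl
    simp only [Finset.mem_compl, Finset.mem_insert, Finset.mem_singleton, not_or] at hl
    rw [fibers_update_of_ne hl.1, Finset.sdiff_singleton_eq_erase,
      Finset.erase_eq_of_notMem (notMem_fibers_of_mem_fibers hg hl.2)]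
  rw [← Finset.sum_add_sum_compl {i, j}, ← Finset.sum_add_sum_compl {i, j} (fun l => _ ^ 2),
    Finset.sum_congr rfl hrest, Finset.sum_pair hij, Finset.sum_pair hij, fibers_update_self hgA,
    fibers_update_of_ne hij.symm, hadd.map_insert (notMem_fibers_of_mem_fibers hg hij)]
  rw [hadd.map_sdiff_singleton hg] at hlt ⊢
  nlinarith [mul_pos hpos (sub_pos.2 hlt)]

/-- A partition minimising the sum of squared values is EFX: moving an item `g` from `P j` to a
poorer bundle `P i` with `v (P i) < v (P j) - v {g}` would lower that sum. -/
lemma exists_isEFX_fibers [NeZero k] (hadd : IsAdditive v) (hnn : ∀ S : Finset ι, 0 ≤ v S)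
    (A : Finset ι) (hpos : ∀ g ∈ A, 0 < v {g}) : ∃ f : ι → Fin k, IsEFX v (fibers A f) := by
  set Φ : (ι → Fin k) → ℝ := fun f => ∑ l, v (fibers A f l) ^ 2
  have hfin : (Set.range Φ).Finite := by
    have : (Set.range (fibers A : (ι → Fin k) → Fin k → Finset ι)).Finite :=
      (Set.Finite.pi fun _ => A.powerset.finite_toSet).subset <| by
        rintro _ ⟨f, rfl⟩ i -
        exact Finset.mem_powerset.2 ((isPartition_fibers A f).subset i)
    rw [show Φ = (fun P : Fin k → Finset ι => ∑ l, v (P l) ^ 2) ∘ fibers A from rfl,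
      Set.range_comp]
    exact this.image _
  obtain ⟨_, ⟨f, rfl⟩, hmin⟩ := Set.exists_min_image _ id hfin (Set.range_nonempty Φ)
  refine ⟨f, fun i j g hg => ?_⟩
  obtain rfl | hij := eq_or_ne i j
  · exact hadd.monotone hnn Finset.sdiff_subset
  by_contra! hlt
  exact (hmin _ ⟨update f g i, rfl⟩).not_gt
    (sum_sq_fibers_update_lt hadd hij hg (hpos g (mem_fibers.1 hg).1) hlt)

end EFX

section Share

variable {ι : Type*} [DecidableEq ι] {M : Finset ι} {v : Finset ι → ℝ} {n : ℕ}

lemma eefxFeasible_of_subset {T : Finset ι} (hMT : M ⊆ T) : EEFXFeasible M v n T := by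
  refine ⟨fun _ => ∅, ⟨fun _ _ _ => Finset.disjoint_empty_left _, ?_⟩, by simp⟩
  ext
  simp [Finset.sdiff_eq_empty_iff_subset.2 hMT]

lemma strongShare_le {S : Finset ι} (hS : S ⊆ M)
    (h : ∀ T ⊆ M, ¬EEFXFeasible M v n T → v T < v S) : strongShare M v n ≤ v S := by
  refine csInf_le ?_ ⟨S, hS, rfl, fun T hT hle => by_contra fun hinf => (h T hT hinf).not_ge hle⟩
  refine ((M.powerset.finite_toSet.image v).subset ?_).bddBelow
  rintro _ ⟨T, hT, rfl, -⟩
  exact ⟨T, Finset.mem_powerset.2 hT, rfl⟩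

lemma exists_isPartition_lt_of_not_eefxFeasible (hn : 1 ≤ n) (hadd : IsAdditive v)
    (hnn : ∀ S : Finset ι, 0 ≤ v S) (hnd : NonDegenerate M v) {T : Finset ι} (hT : T ⊆ M)
    (hinf : ¬EEFXFeasible M v n T) :
    ∃ X : Fin n → Finset ι, IsPartition M X ∧ ∀ ℓ, v T < v (X ℓ) := by
  obtain ⟨m, rfl⟩ := Nat.exists_eq_add_of_le' hn
  have hsm := hnd.strictMonoOn hadd hnn
  obtain _ | m := m
  · have hTM : T ⊂ M :=
      Finset.ssubset_iff_subset_ne.2 ⟨hT, fun h => hinf (eefxFeasible_of_subset h.ge)⟩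
    refine ⟨fibers M fun _ => 0, isPartition_fibers M _, fun ℓ => ?_⟩
    rw [Fin.fin_one_eq_zero ℓ, show fibers M (fun _ => (0 : Fin 1)) 0 = M by ext; simp]
    exact hsm hT (Set.mem_Iic.2 le_rfl) hTM
  have hpos : ∀ g ∈ M, 0 < v {g} := fun g hg => by
    simpa [hadd ∅] using hsm (Finset.empty_subset M) (Finset.singleton_subset_iff.2 hg)
      (Finset.empty_ssubset.2 (Finset.singleton_nonempty g))
  obtain ⟨f, hefx⟩ := exists_isEFX_fibers (k := m + 1) hadd hnn (M \ T)
    fun g hg => hpos g (Finset.mem_sdiff.1 hg).1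
  obtain ⟨j, g, hg, hjg⟩ : ∃ j, ∃ g ∈ fibers (M \ T) f j, v T < v (fibers (M \ T) f j \ {g}) := by
    by_contra! h
    exact hinf ⟨fibers (M \ T) f, isPartition_fibers _ f, h⟩
  obtain ⟨⟨hgM, hgT⟩, rfl⟩ := (mem_fibers.1 hg).imp_left Finset.mem_sdiff.1
  refine ⟨fibers M fun x => if x ∈ insert g T then 0 else (f x).succ, isPartition_fibers M _,
    Fin.cases ?_ fun i => ?_⟩
  · rw [fibers_ite_zero (Finset.insert_subset hgM hT), hadd.map_insert hgT]
    linarith [hpos g hgM]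
  · rw [fibers_ite_succ, fibers_sdiff_insert]
    obtain rfl | hi := eq_or_ne i (f g)
    · exact hjg
    · rw [Finset.sdiff_singleton_eq_erase,
        Finset.erase_eq_of_notMem (notMem_fibers_of_mem_fibers hg hi)]
      exact hjg.trans_le (hefx i (f g) g hg)

end Share

theorem stmt8 {ι : Type*} [DecidableEq ι] (M : Finset ι) (v : Finset ι → ℝ) (n : ℕ)
    (hn : 1 ≤ n) (hadd : IsAdditive v) (hnn : ∀ S : Finset ι, 0 ≤ v S)
    (hnd : NonDegenerate M v) :
    ∃ X : Fin n → Finset ι, IsPartition M X ∧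
      ∀ ℓ : Fin n, strongShare M v n ≤ v (X ℓ) := by
  classical
  obtain ⟨X, hX, hXv⟩ : ∃ X : Fin n → Finset ι, IsPartition M X ∧
      ∀ ℓ, ∀ T ⊆ M, ¬EEFXFeasible M v n T → v T < v (X ℓ) := by
    by_cases hall : ∀ T ⊆ M, EEFXFeasible M v n T
    · exact ⟨fibers M fun _ => ⟨0, hn⟩, isPartition_fibers M _,
        fun _ T hT hinf => absurd (hall T hT) hinf⟩
    push Not at hall
    obtain ⟨T, hTmem, hTmax⟩ :=
      (M.powerset.filter fun T => ¬EEFXFeasible M v n T).exists_max_image v <| by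
        obtain ⟨T, hT, hinf⟩ := hall
        exact ⟨T, Finset.mem_filter.2 ⟨Finset.mem_powerset.2 hT, hinf⟩⟩
    obtain ⟨hTM, hinf⟩ := Finset.mem_filter.1 hTmem
    obtain ⟨X, hX, hXv⟩ := exists_isPartition_lt_of_not_eefxFeasible hn hadd hnn hnd
      (Finset.mem_powerset.1 hTM) hinf
    exact ⟨X, hX, fun ℓ T' hT' hinf' =>
      (hTmax T' (Finset.mem_filter.2 ⟨Finset.mem_powerset.2 hT', hinf'⟩)).trans_lt (hXv ℓ)⟩
  exact ⟨X, hX, fun ℓ => strongShare_le (hX.subset ℓ) (hXv ℓ)⟩
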